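/- arXiv:2108.01247 — 2 statements merged into one kernel-verified Lean document; each statement's English description precedes it below -/
import Mathlib

section
/- For every real t with 0 ≤ t ≤ 1, the trilogarithm satisfies Li₃(t) = (8/π) ∫₀¹ ((arcsin(√t · x))² · arccos x)/x dx, where the integral is taken over the real interval [0,1]. -/
/-!
Let `c n = arcsinCoeff n = (2n)!! / (2n+1)!!`. The odd series `S y = ∑ c n y^(2n+1)` satisfies
`(1 - y²) S' - y S = 1`, which forces `S y = arcsin y / √(1 - y²)`; hence `(arcsin²)' = 2 S` and
`arcsin² y = ∑ c n / (n+1) y^(2n+2)` on `(-1, 1)`. Integrating this series term by term against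
`arccos x / x` leaves the moments `∫₀¹ x^(2n+1) arccos x`, which the substitution `x = sin θ` and
one integration by parts turn into the Wallis integrals `∫₀^{π/2} sin^(2n+2) = π / (4 (n+1) c n)`;
the factors `c n` cancel and the `n`-th term becomes `π/8 · t^(n+1) / (n+1)³`.
-/

open Real MeasureTheory intervalIntegral Set

section SeriesDeriv

variable {a : ℕ → ℝ} {C : ℝ}

lemma summable_two_mul_add_succ_mul_pow {x : ℝ} (hx : |x| < 1) (k : ℕ) :
    Summable fun n : ℕ => ((2 * n + k + 1 : ℕ) : ℝ) * |x| ^ (2 * n + k) := by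
  have hx' : ‖|x|‖ < 1 := by rwa [norm_abs_eq_norm]
  have h : Summable fun m : ℕ => ((m + 1 : ℕ) : ℝ) * |x| ^ m := by
    refine ((summable_pow_mul_geometric_of_norm_lt_one 1 hx').add
      (summable_geometric_of_norm_lt_one hx')).congr fun m => ?_
    push_cast
    ring
  exact h.comp_injective (i := fun n : ℕ => 2 * n + k) fun m n hmn => by
    simp only at hmn
    omega

lemma norm_mul_succ_mul_pow_le (ha : ∀ n, |a n| ≤ C) (n m : ℕ) {x r : ℝ} (hxr : |x| ≤ r) :
    ‖a n * ((m + 1 : ℕ) * x ^ m)‖ ≤ C * ((m + 1 : ℕ) * r ^ m) := by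
  rw [norm_mul, norm_mul, norm_pow, Real.norm_natCast, Real.norm_eq_abs, Real.norm_eq_abs]
  exact mul_le_mul (ha n) (by gcongr) (by positivity) ((abs_nonneg _).trans (ha n))

lemma summable_mul_two_mul_add_succ_mul_pow (ha : ∀ n, |a n| ≤ C) (k : ℕ) {x : ℝ}
    (hx : |x| < 1) :
    Summable fun n => a n * ((2 * n + k + 1 : ℕ) * x ^ (2 * n + k)) :=
  .of_norm_bounded ((summable_two_mul_add_succ_mul_pow hx k).mul_left C) fun n =>
    (norm_mul_succ_mul_pow_le ha n _ (x := x) le_rfl).trans (by rw [pow_abs])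

lemma summable_mul_pow_two_mul_add (ha : ∀ n, |a n| ≤ C) (k : ℕ) {x : ℝ} (hx : |x| < 1) :
    Summable fun n => a n * x ^ (2 * n + k) := by
  refine .of_norm_bounded ((summable_two_mul_add_succ_mul_pow hx k).mul_left C) fun n => ?_
  rw [norm_mul, norm_pow, Real.norm_eq_abs, Real.norm_eq_abs]
  exact mul_le_mul (ha n) (le_mul_of_one_le_left (by positivity) (by norm_cast; omega))
    (by positivity) ((abs_nonneg _).trans (ha n))

theorem hasDerivAt_tsum_mul_pow_two_mul_add_succ (ha : ∀ n, |a n| ≤ C) (k : ℕ) {x : ℝ}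
    (hx : |x| < 1) :
    HasDerivAt (fun y => ∑' n, a n * y ^ (2 * n + k + 1))
      (∑' n, a n * ((2 * n + k + 1 : ℕ) * x ^ (2 * n + k))) x := by
  obtain ⟨r, hxr, hr⟩ := exists_between hx
  have hr0 : 0 < r := (abs_nonneg x).trans_lt hxr
  have hr' : |r| < 1 := by rwa [abs_of_pos hr0]
  refine hasDerivAt_tsum_of_isPreconnected (g := fun n y => a n * y ^ (2 * n + k + 1))
    (g' := fun n y => a n * ((2 * n + k + 1 : ℕ) * y ^ (2 * n + k)))
    ((summable_two_mul_add_succ_mul_pow hr' k).mul_left C) Metric.isOpen_ball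
    (convex_ball (0 : ℝ) r).isPreconnected (fun n y _ => ?_) (fun n y hy => ?_)
    (Metric.mem_ball_self hr0) (by simp)
    (by rwa [mem_ball_zero_iff, Real.norm_eq_abs])
  · simpa using (hasDerivAt_pow (2 * n + k + 1) y).const_mul (a n)
  · rw [mem_ball_zero_iff, Real.norm_eq_abs] at hy
    rw [abs_of_pos hr0]
    exact norm_mul_succ_mul_pow_le ha n _ hy.le

end SeriesDeriv

theorem IsOpen.eqOn_of_hasDerivAt {𝕜 G : Type*} [RCLike 𝕜] [NormedAddCommGroup G]
    [NormedSpace 𝕜 G] {s : Set 𝕜} (hs : IsOpen s) (hs' : IsPreconnected s)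
    {f g f' : 𝕜 → G} (hf : ∀ x ∈ s, HasDerivAt f (f' x) x) (hg : ∀ x ∈ s, HasDerivAt g (f' x) x)
    {x₀ : 𝕜} (hx₀ : x₀ ∈ s) (hfg : f x₀ = g x₀) : EqOn f g s :=
  hs.eqOn_of_deriv_eq hs' (fun x hx => (hf x hx).differentiableAt.differentiableWithinAt)
    (fun x hx => (hg x hx).differentiableAt.differentiableWithinAt)
    (fun x hx => by rw [(hf x hx).deriv, (hg x hx).deriv]) hx₀ hfg

noncomputable def arcsinCoeff : ℕ → ℝ
  | 0 => 1
  | n + 1 => (2 * n + 2) / (2 * n + 3) * arcsinCoeff n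

lemma arcsinCoeff_zero : arcsinCoeff 0 = 1 := rfl

lemma arcsinCoeff_pos (n : ℕ) : 0 < arcsinCoeff n := by
  induction n with
  | zero => simp [arcsinCoeff]
  | succ n ih => rw [arcsinCoeff]; positivity

lemma abs_arcsinCoeff_le_one (n : ℕ) : |arcsinCoeff n| ≤ 1 := by
  rw [abs_of_pos (arcsinCoeff_pos n)]
  induction n with
  | zero => simp [arcsinCoeff]
  | succ n ih =>
    rw [arcsinCoeff]
    exact mul_le_one₀ ((div_le_one (by positivity)).2 (by linarith)) (arcsinCoeff_pos n).le ih

lemma abs_arcsinCoeff_div_le_one (n : ℕ) : |arcsinCoeff n / (n + 1)| ≤ 1 := by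
  rw [abs_div, abs_of_pos (by positivity : (0 : ℝ) < n + 1)]
  exact (div_le_self (abs_nonneg _) (by simp)).trans (abs_arcsinCoeff_le_one n)

lemma arcsinCoeff_succ_mul (n : ℕ) :
    arcsinCoeff (n + 1) * (2 * (n + 1) + 1) = arcsinCoeff n * (2 * n + 2) := by
  rw [arcsinCoeff]
  field_simp
  ring

lemma one_sub_sq_mul_tsum_sub_mul_tsum_eq_one {y : ℝ} (hy : |y| < 1) :
    (1 - y ^ 2) * ∑' n, arcsinCoeff n * ((2 * n + 1 : ℕ) * y ^ (2 * n))
      - y * ∑' n, arcsinCoeff n * y ^ (2 * n + 1) = 1 := by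
  have hT := summable_mul_two_mul_add_succ_mul_pow abs_arcsinCoeff_le_one 0 hy
  have hS := summable_mul_pow_two_mul_add abs_arcsinCoeff_le_one 1 hy
  simp only [add_zero] at hT
  have hshift := hT.tsum_eq_zero_add
  have hsplit : y ^ 2 * ∑' n, arcsinCoeff n * ((2 * n + 1 : ℕ) * y ^ (2 * n))
      + y * ∑' n, arcsinCoeff n * y ^ (2 * n + 1)
      = ∑' n, arcsinCoeff (n + 1) * ((2 * (n + 1) + 1 : ℕ) * y ^ (2 * (n + 1))) := by
    rw [← tsum_mul_left, ← tsum_mul_left, ← (hT.mul_left _).tsum_add (hS.mul_left _)]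
    refine tsum_congr fun n => ?_
    push_cast
    linear_combination (-y ^ (2 * n + 2)) * arcsinCoeff_succ_mul n
  linear_combination hshift - hsplit + arcsinCoeff_zero

theorem arcsin_eq_sqrt_mul_tsum :
    EqOn arcsin (fun y => √(1 - y ^ 2) * ∑' n, arcsinCoeff n * y ^ (2 * n + 1)) (Ioo (-1) 1) := by
  refine isOpen_Ioo.eqOn_of_hasDerivAt isPreconnected_Ioo (f' := fun y => 1 / √(1 - y ^ 2))
    (fun y hy => hasDerivAt_arcsin hy.1.ne' hy.2.ne) (fun y hy => ?_) (by norm_num : (0 : ℝ) ∈ _)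
    (by simp)
  have hy2 : 0 < 1 - y ^ 2 := by nlinarith [hy.1, hy.2]
  have hsqrt : HasDerivAt (fun y => √(1 - y ^ 2)) (-(2 * y) / (2 * √(1 - y ^ 2))) y := by
    simpa using ((hasDerivAt_pow 2 y).const_sub 1).sqrt hy2.ne'
  have hseries := hasDerivAt_tsum_mul_pow_two_mul_add_succ abs_arcsinCoeff_le_one 0 (abs_lt.2 hy)
  simp only [add_zero] at hseries
  refine (hsqrt.fun_mul hseries).congr_deriv ?_
  have hode := one_sub_sq_mul_tsum_sub_mul_tsum_eq_one (abs_lt.2 hy)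
  set S := ∑' n, arcsinCoeff n * y ^ (2 * n + 1)
  set T := ∑' n, arcsinCoeff n * ((2 * n + 1 : ℕ) * y ^ (2 * n))
  have hpos : 0 < √(1 - y ^ 2) := sqrt_pos.2 hy2
  field_simp
  linear_combination hode + T * sq_sqrt hy2.le

theorem arcsin_sq_eq_tsum :
    EqOn (fun y => arcsin y ^ 2) (fun y => ∑' n, arcsinCoeff n / (n + 1) * y ^ (2 * n + 2))
      (Ioo (-1) 1) := by
  refine isOpen_Ioo.eqOn_of_hasDerivAt isPreconnected_Ioo
    (f' := fun y => 2 * ∑' n, arcsinCoeff n * y ^ (2 * n + 1)) (fun y hy => ?_) (fun y hy => ?_)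
    (by norm_num : (0 : ℝ) ∈ _) (by simp)
  · have hy2 : 0 < √(1 - y ^ 2) := sqrt_pos.2 (by nlinarith [hy.1, hy.2])
    refine ((hasDerivAt_arcsin hy.1.ne' hy.2.ne).pow 2).congr_deriv ?_
    rw [arcsin_eq_sqrt_mul_tsum hy]
    field_simp
    ring
  · refine (hasDerivAt_tsum_mul_pow_two_mul_add_succ abs_arcsinCoeff_div_le_one 1
      (abs_lt.2 hy)).congr_deriv ?_
    rw [← tsum_mul_left]
    refine tsum_congr fun n => ?_
    push_cast
    field_simp
    ring

lemma integral_sin_pow_two_mul_add_two (n : ℕ) :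
    ∫ θ in (0 : ℝ)..π / 2, sin θ ^ (2 * n + 2) = π / (4 * (n + 1) * arcsinCoeff n) := by
  have hrec : ∀ m : ℕ, ∫ θ in (0 : ℝ)..π / 2, sin θ ^ (m + 2)
      = (m + 1) / (m + 2) * ∫ θ in (0 : ℝ)..π / 2, sin θ ^ m := fun m => by
    simp [integral_sin_pow]
  induction n with
  | zero => norm_num [hrec 0, arcsinCoeff_zero]; ring
  | succ n ih =>
    rw [show 2 * (n + 1) + 2 = 2 * n + 2 + 2 by ring, hrec, ih, arcsinCoeff]
    have := arcsinCoeff_pos n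
    push_cast
    field_simp
    ring

lemma integral_pow_mul_arccos (n : ℕ) :
    ∫ x in (0 : ℝ)..1, x ^ (2 * n + 1) * arccos x = π / (8 * (n + 1) ^ 2 * arcsinCoeff n) := by
  have hsubst : ∫ x in (0 : ℝ)..1, x ^ (2 * n + 1) * arccos x
      = ∫ θ in (0 : ℝ)..π / 2, (π / 2 - θ) * (sin θ ^ (2 * n + 1) * cos θ) := by
    have h := integral_comp_mul_deriv (a := 0) (b := π / 2) (f := sin) (f' := cos)
      (g := fun x => x ^ (2 * n + 1) * arccos x) (fun θ _ => hasDerivAt_sin θ)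
      continuous_cos.continuousOn (by fun_prop)
    rw [sin_zero, sin_pi_div_two] at h
    rw [← h]
    refine intervalIntegral.integral_congr fun θ hθ => ?_
    rw [uIcc_of_le (by positivity)] at hθ
    rw [Function.comp_apply, arccos_eq_pi_div_two_sub_arcsin,
      arcsin_sin (by linarith [hθ.1, pi_pos]) hθ.2]
    ring
  have hv : ∀ θ, HasDerivAt (fun θ => sin θ ^ (2 * n + 2) / (2 * n + 2))
      (sin θ ^ (2 * n + 1) * cos θ) θ := fun θ => by
    refine (((hasDerivAt_sin θ).pow (2 * n + 2)).div_const _).congr_deriv ?_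
    push_cast
    field_simp
  have hparts := integral_mul_deriv_eq_deriv_mul (a := 0) (b := π / 2)
    (u := fun θ => π / 2 - θ) (fun θ _ => (hasDerivAt_id' θ).const_sub (π / 2)) (fun θ _ => hv θ)
    intervalIntegrable_const (by apply Continuous.intervalIntegrable; fun_prop)
  rw [hsubst, hparts, intervalIntegral.integral_const_mul, intervalIntegral.integral_div,
    integral_sin_pow_two_mul_add_two]
  have := arcsinCoeff_pos n
  simp only [sub_self, sin_pi_div_two, sin_zero, one_pow, zero_mul, sub_zero, neg_mul, one_mul]
  rw [zero_pow (by omega)]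
  field_simp
  ring

lemma arcsin_sq_mul_arccos_div_eq_tsum {s x : ℝ} (hs : |s| ≤ 1) (hx : x ∈ Ioo 0 1) :
    arcsin (s * x) ^ 2 * arccos x / x
      = ∑' n, arcsinCoeff n / (n + 1) * (s ^ 2) ^ (n + 1) * (x ^ (2 * n + 1) * arccos x) := by
  have hsx : |s * x| < 1 := by
    rw [abs_mul, abs_of_pos hx.1]
    nlinarith [abs_nonneg s, hx.1, hx.2]
  rw [show arcsin (s * x) ^ 2 = _ from arcsin_sq_eq_tsum (abs_lt.1 hsx), div_eq_mul_inv,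
    ← tsum_mul_right, ← tsum_mul_right]
  refine tsum_congr fun n => ?_
  have := hx.1.ne'
  field_simp
  ring

lemma integral_arcsinCoeff_mul_pow_mul_arccos (s : ℝ) (n : ℕ) :
    ∫ x in (0 : ℝ)..1, arcsinCoeff n / (n + 1) * (s ^ 2) ^ (n + 1) * (x ^ (2 * n + 1) * arccos x)
      = π / 8 * ((s ^ 2) ^ (n + 1) / (n + 1) ^ 3) := by
  rw [intervalIntegral.integral_const_mul, integral_pow_mul_arccos]
  have := arcsinCoeff_pos n
  field_simp

lemma summable_pi_div_eight_mul_pow_div_cube {u : ℝ} (hu0 : 0 ≤ u) (hu1 : u ≤ 1) :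
    Summable fun n : ℕ => π / 8 * (u ^ (n + 1) / (n + 1) ^ 3) := by
  have h : Summable fun n : ℕ => 1 / ((n + 1 : ℕ) : ℝ) ^ 3 :=
    (summable_nat_add_iff 1).2 (Real.summable_one_div_nat_pow.2 (by norm_num))
  refine (h.mul_left (π / 8)).of_nonneg_of_le (fun n => by positivity) fun n => ?_
  push_cast
  gcongr
  exact pow_le_one₀ hu0 hu1

theorem hasSum_integral_arcsin_sq_mul_arccos_div {s : ℝ} (hs : |s| ≤ 1) :
    HasSum (fun n : ℕ => π / 8 * ((s ^ 2) ^ (n + 1) / (n + 1) ^ 3))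
      (∫ x in (0 : ℝ)..1, arcsin (s * x) ^ 2 * arccos x / x) := by
  set F : ℕ → ℝ → ℝ := fun n x =>
    arcsinCoeff n / (n + 1) * (s ^ 2) ^ (n + 1) * (x ^ (2 * n + 1) * arccos x)
  have hF_int (n : ℕ) : ∫ x in Ioo 0 1, F n x = π / 8 * ((s ^ 2) ^ (n + 1) / (n + 1) ^ 3) := by
    rw [← integral_Ioc_eq_integral_Ioo, ← intervalIntegral.integral_of_le zero_le_one,
      integral_arcsinCoeff_mul_pow_mul_arccos]
  have hF_norm (n : ℕ) : ∫ x in Ioo 0 1, ‖F n x‖ = ∫ x in Ioo 0 1, F n x := by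
    refine setIntegral_congr_fun measurableSet_Ioo fun x hx => norm_of_nonneg ?_
    have := arcsinCoeff_pos n
    have := arccos_nonneg x
    have := hx.1
    positivity
  have hsum := hasSum_integral_of_summable_integral_norm (μ := volume.restrict (Ioo 0 1)) (F := F)
    (fun n => (Continuous.integrableOn_Icc (by fun_prop)).mono_set Ioo_subset_Icc_self)
    ((summable_pi_div_eight_mul_pow_div_cube (sq_nonneg s)
      ((sq_le_one_iff_abs_le_one s).2 hs)).congr fun n => by rw [hF_norm, hF_int])
  simp only [hF_int] at hsum
  rwa [intervalIntegral.integral_of_le zero_le_one, integral_Ioc_eq_integral_Ioo,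
    setIntegral_congr_fun measurableSet_Ioo fun x hx => arcsin_sq_mul_arccos_div_eq_tsum hs hx]

open Real in
/-- Local integral representation of the trilogarithm `Li₃(t) = ∑_{n=1}^∞ tⁿ/n³`. -/
theorem trilog_eq_integral (t : ℝ) (ht0 : 0 ≤ t) (ht1 : t ≤ 1) :
    ∑' n : ℕ, t ^ (n + 1) / (n + 1 : ℝ) ^ 3 =
      (8 / π) * ∫ x in (0:ℝ)..1, (arcsin (Real.sqrt t * x)) ^ 2 * arccos x / x := by
  have hs : |√t| ≤ 1 := by rwa [abs_of_nonneg (sqrt_nonneg t), sqrt_le_one]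
  have h := hasSum_integral_arcsin_sq_mul_arccos_div hs
  rw [sq_sqrt ht0] at h
  rw [← h.tsum_eq, tsum_mul_left]
  field_simp
end

section
/- ∫₀¹ ((arcsin x)³)/x dx = (π³/8)·log 2 − (9/16)·π·ζ(3), where the integral is taken over the real interval [0,1]. (Here the formula follows from I(3,0) = (π/2)·I(2,0) − I(2,1) with I(2,0) = (π²/4)log 2 − (7/8)ζ(3) and I(2,1) = (π/8)ζ(3).) -/
/-!
Substituting `x = sin θ` and integrating by parts (`θ³ log sin θ` vanishes at both ends) gives
`∫₀¹ arcsin³ x / x dx = ∫₀^{π/2} θ³ cot θ dθ = -3 ∫₀^{π/2} θ² log sin θ dθ`.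
The last integral comes from the Fourier series `-log (2 sin θ) = ∑_{k ≥ 1} cos (2kθ) / k`, the real
part of the logarithmic series of `-log (1 - e^{2iθ})`. Its `N`-th remainder is `O(1 / (N sin θ))`
and `θ² / sin θ` is bounded, so the series may be integrated termwise against `θ²`; with
`∫₀^{π/2} θ² cos (2kθ) dθ = π (-1)^k / (4k²)` this gives
`∫₀^{π/2} θ² log (2 sin θ) dθ = (π/4) ∑_{k ≥ 1} (-1)^{k+1} / k³ = (3π/16) ζ(3)`.
-/

open Real Filter Topology Finset Set intervalIntegral
open MeasureTheory (volume)

lemma summable_one_div_nat_add_one_pow {k : ℕ} (hk : 1 < k) :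
    Summable fun n : ℕ => 1 / ((n : ℝ) + 1) ^ k := by
  simpa [Function.comp_def] using
    (Real.summable_one_div_nat_pow.mpr hk).comp_injective Nat.succ_injective

lemma riemannZeta_natCast_eq_tsum {k : ℕ} (hk : 1 < k) :
    riemannZeta k = ((∑' n : ℕ, 1 / ((n : ℝ) + 1) ^ k : ℝ) : ℂ) := by
  rw [Complex.ofReal_tsum, zeta_eq_tsum_one_div_nat_add_one_cpow (by simpa using hk)]
  push_cast
  simp [Complex.cpow_natCast]

lemma hasSum_neg_one_pow_div_nat_add_one_pow {k : ℕ} (hk : 1 < k) :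
    HasSum (fun n : ℕ => (-1) ^ n / ((n : ℝ) + 1) ^ k)
      ((1 - 2 / 2 ^ k) * ∑' n : ℕ, 1 / ((n : ℝ) + 1) ^ k) := by
  set f : ℕ → ℝ := fun n => 1 / ((n : ℝ) + 1) ^ k
  set Z := ∑' n, f n
  have hf : HasSum f Z := (summable_one_div_nat_add_one_pow hk).hasSum
  have hodd : HasSum (fun m => f (2 * m + 1)) (Z / 2 ^ k) := by
    refine (hf.div_const (2 ^ k)).congr_fun fun m => ?_
    simp only [f]
    push_cast
    rw [show (2 * (m : ℝ) + 1 + 1) = 2 * (m + 1) by ring, mul_pow]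
    field_simp
  have heven : HasSum (fun m => f (2 * m)) (Z - Z / 2 ^ k) := by
    have he : Summable fun m => f (2 * m) :=
      hf.summable.comp_injective fun a b h => by simpa using h
    convert he.hasSum using 1
    linarith [(he.hasSum.even_add_odd hodd).unique hf]
  have := HasSum.even_add_odd (f := fun n : ℕ => (-1) ^ n / ((n : ℝ) + 1) ^ k)
    (by simpa [f, pow_mul] using heven) (by simpa [f, pow_succ, pow_mul, neg_div] using hodd.neg)
  convert this using 1
  ring

lemma Complex.one_sub_mem_slitPlane {w : ℂ} (hw : ‖w‖ ≤ 1) (hw1 : w ≠ 1) :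
    1 - w ∈ Complex.slitPlane := by
  refine Complex.mem_slitPlane_iff.mpr (Or.inl ?_)
  suffices w.re ≠ 1 by
    have := (Complex.re_le_norm w).trans hw
    simp only [Complex.sub_re, Complex.one_re]; grind
  intro hre
  have hnorm : |w.re| = ‖w‖ := by
    rw [hre, abs_one]; exact le_antisymm (by simpa [hre] using Complex.abs_re_le_norm w) hw
  exact hw1 (Complex.ext hre (Complex.abs_re_eq_norm.mp hnorm))

/-- The remainder of the logarithmic series at `s z` vanishes at `s = 0` and has `s`-derivative
`-z ^ (N + 1) s ^ N / (1 - s z)`, which the fencing theorem integrates over `s ∈ [0, 1]`. -/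
lemma Complex.norm_sum_pow_succ_div_add_log_one_sub_le {z : ℂ} {c : ℝ} (hz : ‖z‖ ≤ 1)
    (hc : 0 < c) (hcz : ∀ t ∈ Icc (0 : ℝ) 1, c ≤ ‖1 - t * z‖) (N : ℕ) :
    ‖∑ k ∈ range N, z ^ (k + 1) / (k + 1) + log (1 - z)‖ ≤ 1 / (c * (N + 1)) := by
  set f : ℝ → ℂ := fun s => ∑ k ∈ range N, ((s : ℂ) * z) ^ (k + 1) / (k + 1) + log (1 - s * z)
  have hne : ∀ t ∈ Icc (0 : ℝ) 1, 1 - t * z ≠ 0 := fun t ht h => by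
    simpa [h] using hc.trans_le (hcz t ht)
  have hderiv : ∀ s ∈ Icc (0 : ℝ) 1,
      HasDerivAt f (-(z ^ (N + 1) * s ^ N) / (1 - s * z)) s := by
    intro s hs
    have hlin : HasDerivAt (fun s : ℝ => (s : ℂ) * z) z s := by
      simpa using (hasDerivAt_id s).ofReal_comp.mul_const z
    have hslit : 1 - (s : ℂ) * z ∈ slitPlane := by
      refine one_sub_mem_slitPlane ?_ fun h => hne s hs (by rw [h, sub_self])
      simpa [abs_of_nonneg hs.1] using mul_le_one₀ hs.2 (norm_nonneg z) hz
    have hpoly := HasDerivAt.fun_sum (u := range N) fun k _ =>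
      (hlin.pow (k + 1)).div_const (k + 1 : ℂ)
    refine (hpoly.add ((hlin.const_sub 1).clog_real hslit)).congr_deriv ?_
    have hne' := hne s hs
    have hgeom : ∑ i ∈ range N, ((s : ℂ) * z) ^ i = (1 - (s * z) ^ N) / (1 - s * z) := by
      rw [eq_div_iff hne', geom_sum_mul_neg]
    have hterm : ∑ i ∈ range N, ((i + 1 : ℕ) : ℂ) * ((s : ℂ) * z) ^ (i + 1 - 1) * z / (i + 1)
        = z * ∑ i ∈ range N, ((s : ℂ) * z) ^ i := by
      rw [mul_sum]
      refine sum_congr rfl fun i _ => ?_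
      have : (i : ℂ) + 1 ≠ 0 := by exact_mod_cast i.succ_ne_zero
      push_cast; field_simp
    rw [hterm, hgeom]
    field_simp
    ring
  have hB : ∀ s : ℝ, HasDerivAt (fun s => s ^ (N + 1) / (c * (N + 1))) (s ^ N / c) s := by
    intro s
    refine ((hasDerivAt_pow (N + 1) s).div_const (c * (N + 1))).congr_deriv ?_
    field_simp
    push_cast
    ring
  have hbound : ∀ s ∈ Ico (0 : ℝ) 1, ‖-(z ^ (N + 1) * s ^ N) / (1 - s * z)‖ ≤ s ^ N / c := by
    intro s hs
    have hs' := Ico_subset_Icc_self hs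
    rw [norm_div, norm_neg, norm_mul, norm_pow, norm_pow, Complex.norm_real,
      Real.norm_of_nonneg hs.1]
    exact div_le_div₀ (pow_nonneg hs.1 N)
      (mul_le_of_le_one_left (pow_nonneg hs.1 N) (pow_le_one₀ (norm_nonneg z) hz)) hc (hcz s hs')
  have := image_norm_le_of_norm_deriv_right_le_deriv_boundary
    (fun s hs => (hderiv s hs).continuousAt.continuousWithinAt)
    (fun s hs => (hderiv s (Ico_subset_Icc_self hs)).hasDerivWithinAt) (by simp [f]) hB hbound
    (right_mem_Icc.mpr zero_le_one)
  simpa [f] using this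

lemma sin_le_norm_one_sub_mul_exp {θ t : ℝ} (ht : t ∈ Icc (0 : ℝ) 1) :
    sin θ ≤ ‖1 - t * Complex.exp ((2 * θ : ℝ) * Complex.I)‖ := by
  have hsq : ‖1 - t * Complex.exp ((2 * θ : ℝ) * Complex.I)‖ ^ 2 =
      1 - 2 * t * cos (2 * θ) + t ^ 2 := by
    rw [Complex.sq_norm, Complex.normSq_apply]
    simp only [Complex.sub_re, Complex.sub_im, Complex.one_re, Complex.one_im, Complex.mul_re,
      Complex.mul_im, Complex.ofReal_re, Complex.ofReal_im, Complex.exp_ofReal_mul_I_re,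
      Complex.exp_ofReal_mul_I_im]
    linear_combination t ^ 2 * sin_sq_add_cos_sq (2 * θ)
  refine (abs_le_of_sq_le_sq' ?_ (norm_nonneg _)).2
  rw [hsq, sin_sq_eq_half_sub]
  nlinarith [neg_one_le_cos (2 * θ), cos_le_one (2 * θ), sq_nonneg (t - cos (2 * θ)), ht.1, ht.2,
    mul_nonneg ht.1 (sub_nonneg.2 ht.2)]

lemma abs_sum_cos_div_add_log_two_sin_le {θ : ℝ} (hθ : 0 < sin θ) (N : ℕ) :
    |∑ k ∈ range N, cos (2 * (k + 1) * θ) / (k + 1) + log (2 * sin θ)| ≤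
      1 / (sin θ * (N + 1)) := by
  set z := Complex.exp ((2 * θ : ℝ) * Complex.I)
  have hz : ‖z‖ = 1 := Complex.norm_exp_ofReal_mul_I _
  have hz1 : ‖1 - z‖ = 2 * sin θ := by
    rw [norm_sub_rev, show z = Complex.exp (Complex.I * (2 * θ : ℝ)) by rw [mul_comm],
      Complex.norm_exp_I_mul_ofReal_sub_one]
    simp [abs_of_pos hθ]
  have hre : (∑ k ∈ range N, z ^ (k + 1) / (k + 1) + Complex.log (1 - z)).re =
      ∑ k ∈ range N, cos (2 * (k + 1) * θ) / (k + 1) + log (2 * sin θ) := by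
    rw [Complex.add_re, Complex.log_re, hz1, Complex.re_sum]
    congr 1
    refine sum_congr rfl fun k _ => ?_
    rw [← Complex.exp_nat_mul, ← Nat.cast_succ, Complex.div_natCast_re,
      show ((k + 1 : ℕ) : ℂ) * ((2 * θ : ℝ) * Complex.I) = (2 * (k + 1) * θ : ℝ) * Complex.I by
        push_cast; ring, Complex.exp_ofReal_mul_I_re]
    push_cast; rfl
  rw [← hre]
  exact (Complex.abs_re_le_norm _).trans <| Complex.norm_sum_pow_succ_div_add_log_one_sub_le
    hz.le hθ (fun t ht => sin_le_norm_one_sub_mul_exp ht) N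

lemma sin_pos_of_pos_of_le_pi_div_two {θ : ℝ} (h0 : 0 < θ) (h1 : θ ≤ π / 2) : 0 < sin θ :=
  sin_pos_of_pos_of_lt_pi h0 (by linarith [pi_pos])

lemma mapsTo_sin_Icc : MapsTo sin (Icc 0 (π / 2)) (Icc 0 1) := fun θ hθ =>
  ⟨sin_nonneg_of_nonneg_of_le_pi hθ.1 (by linarith [hθ.2, pi_pos]), sin_le_one θ⟩

lemma le_pi_div_two_mul_sin {x : ℝ} (h0 : 0 ≤ x) (h1 : x ≤ π / 2) : x ≤ π / 2 * sin x := by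
  have := mul_le_sin h0 h1
  rw [div_mul_eq_mul_div, div_le_iff₀ pi_pos] at this
  linarith

lemma div_sin_le_pi_div_two {x : ℝ} (h0 : 0 < x) (h1 : x ≤ π / 2) : x / sin x ≤ π / 2 := by
  rw [div_le_iff₀ (sin_pos_of_pos_of_le_pi_div_two h0 h1)]
  exact le_pi_div_two_mul_sin h0.le h1

lemma continuousOn_Icc_of_abs_le_mul {f : ℝ → ℝ} {b C : ℝ} (hf : ∀ x ∈ Ioc 0 b, ContinuousAt f x)
    (h0 : f 0 = 0) (hC : ∀ x ∈ Ioc 0 b, |f x| ≤ C * x) : ContinuousOn f (Icc 0 b) := by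
  intro x hx
  rcases hx.1.eq_or_lt with rfl | hx0
  · rw [ContinuousWithinAt, h0]
    refine squeeze_zero_norm' ?_ (?_ : Tendsto (fun y => C * y) (𝓝[Icc 0 b] 0) (𝓝 0))
    · filter_upwards [self_mem_nhdsWithin] with y hy
      rcases hy.1.eq_or_lt with rfl | hy0
      · simp [h0]
      · exact hC y ⟨hy0, hy.2⟩
    · simpa using ((continuous_const_mul C).tendsto 0).mono_left nhdsWithin_le_nhds
  · exact (hf x ⟨hx0, hx.2⟩).continuousWithinAt

/-- At `x = 0` the junk value `0 / 0 = 0` is also the limit of `arcsin x ^ 3 / x`. -/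
lemma continuousOn_arcsin_pow_three_div : ContinuousOn (fun x => arcsin x ^ 3 / x) (Icc 0 1) := by
  refine continuousOn_Icc_of_abs_le_mul (C := (π / 2) ^ 3)
    (fun x hx => (continuous_arcsin.continuousAt.pow 3).div continuousAt_id hx.1.ne') (by simp)
    fun x hx => ?_
  have h0 : 0 ≤ arcsin x := arcsin_nonneg.mpr hx.1.le
  have hle : arcsin x ≤ π / 2 * x := by
    simpa [sin_arcsin (by linarith [hx.1]) hx.2] using
      le_pi_div_two_mul_sin h0 (arcsin_le_pi_div_two x)
  rw [abs_of_nonneg (by have := hx.1; positivity), div_le_iff₀ hx.1]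
  calc arcsin x ^ 3 ≤ (π / 2 * x) ^ 3 := by gcongr
    _ ≤ (π / 2) ^ 3 * x * x := by
      rw [mul_pow, mul_assoc]
      gcongr
      nlinarith [hx.1, hx.2]

lemma continuousOn_pow_three_mul_log_sin :
    ContinuousOn (fun θ => θ ^ 3 * log (sin θ)) (Icc 0 (π / 2)) := by
  refine continuousOn_Icc_of_abs_le_mul (C := (π / 2) ^ 2) (fun θ hθ => ?_) (by simp)
    fun θ hθ => ?_
  all_goals have hsin : 0 < sin θ := sin_pos_of_pos_of_le_pi_div_two hθ.1 hθ.2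
  · exact (continuous_pow 3).continuousAt.mul
      ((continuousAt_log hsin.ne').comp continuous_sin.continuousAt)
  have hθ0 := hθ.1.le
  calc |θ ^ 3 * log (sin θ)| = θ ^ 2 * (θ / sin θ) * |log (sin θ) * sin θ| := by
        rw [abs_mul, abs_mul, abs_of_pos hsin, abs_of_nonneg (by positivity)]
        field_simp
    _ ≤ θ ^ 2 * (π / 2) * 1 :=
        mul_le_mul (mul_le_mul_of_nonneg_left (div_sin_le_pi_div_two hθ.1 hθ.2) (by positivity))
          (abs_log_mul_self_lt _ hsin (sin_le_one θ)).le (abs_nonneg _) (by positivity)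
    _ ≤ (π / 2) ^ 2 * θ := by
        nlinarith [mul_le_mul_of_nonneg_left hθ.2 (by positivity : 0 ≤ θ * (π / 2))]

lemma continuousOn_pow_three_mul_cos_div_sin :
    ContinuousOn (fun θ => θ ^ 3 * cos θ / sin θ) (Icc 0 (π / 2)) := by
  refine (continuous_cos.continuousOn.mul
    (continuousOn_arcsin_pow_three_div.comp continuous_sin.continuousOn mapsTo_sin_Icc)).congr
    fun θ hθ => ?_
  simp only [Pi.mul_apply, Function.comp_apply, arcsin_sin (by linarith [hθ.1, pi_pos]) hθ.2]
  ring

lemma integral_arcsin_pow_three_div :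
    ∫ x in (0 : ℝ)..1, arcsin x ^ 3 / x = ∫ θ in (0 : ℝ)..(π / 2), θ ^ 3 * cos θ / sin θ := by
  have h := integral_deriv_smul_comp' (a := 0) (b := π / 2) (g := fun x => arcsin x ^ 3 / x)
    (fun θ _ => hasDerivAt_sin θ) continuous_cos.continuousOn
    (continuousOn_arcsin_pow_three_div.mono ?_)
  · rw [sin_zero, sin_pi_div_two] at h
    rw [← h]
    refine integral_congr fun θ hθ => ?_
    rw [Set.uIcc_of_le (by positivity)] at hθ
    simp only [Function.comp_apply, smul_eq_mul, arcsin_sin (by linarith [hθ.1, pi_pos]) hθ.2]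
    ring
  · rw [Set.uIcc_of_le (by positivity)]
    exact mapsTo_sin_Icc.image_subset

lemma integral_pow_three_mul_cos_div_sin :
    ∫ θ in (0 : ℝ)..(π / 2), θ ^ 3 * cos θ / sin θ =
      -3 * ∫ θ in (0 : ℝ)..(π / 2), θ ^ 2 * log (sin θ) := by
  have hint : IntervalIntegrable (fun θ => θ ^ 2 * log (sin θ)) volume 0 (π / 2) :=
    intervalIntegrable_log_sin.continuousOn_mul (continuous_pow 2).continuousOn
  have hint' : IntervalIntegrable (fun θ => θ ^ 3 * cos θ / sin θ) volume 0 (π / 2) :=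
    (continuousOn_pow_three_mul_cos_div_sin.mono
      (by rw [Set.uIcc_of_le (by positivity)])).intervalIntegrable
  have hftc := integral_eq_sub_of_hasDerivAt_of_le (by positivity)
    continuousOn_pow_three_mul_log_sin (fun θ hθ => ?_) ((hint.const_mul 3).add hint')
  · rw [integral_add (hint.const_mul 3) hint', integral_const_mul] at hftc
    simp only [sin_pi_div_two, log_one, mul_zero, sin_zero, log_zero, sub_zero] at hftc
    linarith
  · have hsin : 0 < sin θ := sin_pos_of_pos_of_le_pi_div_two hθ.1 hθ.2.le
    refine ((hasDerivAt_pow 3 θ).mul ((hasDerivAt_sin θ).log hsin.ne')).congr_deriv ?_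
    push_cast; ring

lemma integral_sq_mul_cos {a : ℝ} (ha : a ≠ 0) (b : ℝ) :
    ∫ x in (0 : ℝ)..b, x ^ 2 * cos (a * x) =
      b ^ 2 * sin (a * b) / a + 2 * b * cos (a * b) / a ^ 2 - 2 * sin (a * b) / a ^ 3 := by
  have hderiv : ∀ x ∈ uIcc 0 b, HasDerivAt
      (fun x => x ^ 2 * sin (a * x) / a + 2 * x * cos (a * x) / a ^ 2 - 2 * sin (a * x) / a ^ 3)
      (x ^ 2 * cos (a * x)) x := by
    intro x _
    have hlin : HasDerivAt (fun x => a * x) a x := by simpa using (hasDerivAt_id x).const_mul a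
    have hs := hlin.sin
    have hc := hlin.cos
    refine ((((hasDerivAt_pow 2 x).mul hs).div_const a).add
      ((((hasDerivAt_id' x).const_mul 2).mul hc).div_const (a ^ 2)) |>.sub
      ((hs.const_mul 2).div_const (a ^ 3))).congr_deriv ?_
    field_simp
    ring
  rw [integral_eq_sub_of_hasDerivAt hderiv
    ((by fun_prop : Continuous fun x => x ^ 2 * cos (a * x)).intervalIntegrable _ _)]
  simp

lemma integral_sq_mul_cos_two_mul_nat {m : ℕ} (hm : m ≠ 0) :
    ∫ x in (0 : ℝ)..(π / 2), x ^ 2 * cos (2 * m * x) = π * (-1) ^ m / (4 * m ^ 2) := by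
  have hm' : (m : ℝ) ≠ 0 := Nat.cast_ne_zero.mpr hm
  rw [integral_sq_mul_cos (by positivity), show 2 * (m : ℝ) * (π / 2) = m * π by ring,
    sin_nat_mul_pi, cos_nat_mul_pi]
  field_simp
  ring

lemma integral_sq_mul_sum_cos (N : ℕ) :
    ∫ θ in (0 : ℝ)..(π / 2), θ ^ 2 * ∑ k ∈ range N, cos (2 * (k + 1) * θ) / (k + 1) =
      -(π / 4) * ∑ k ∈ range N, (-1) ^ k / ((k : ℝ) + 1) ^ 3 := by
  simp_rw [mul_sum]
  rw [integral_finsetSum fun k _ => (by fun_prop : Continuous _).intervalIntegrable _ _]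
  refine sum_congr rfl fun k _ => ?_
  have h := integral_sq_mul_cos_two_mul_nat k.succ_ne_zero
  push_cast at h
  simp_rw [mul_div_assoc', integral_div, h]
  rw [pow_succ]
  field_simp

lemma intervalIntegrable_sq_mul_log_two_sin :
    IntervalIntegrable (fun θ => θ ^ 2 * log (2 * sin θ)) volume 0 (π / 2) :=
  (analyticOnNhd_const.mul analyticOnNhd_sin).meromorphicOn.intervalIntegrable_log.continuousOn_mul
    (continuous_pow 2).continuousOn

lemma tendsto_integral_sq_mul_sum_cos :
    Tendsto (fun N : ℕ =>
        ∫ θ in (0 : ℝ)..(π / 2), θ ^ 2 * ∑ k ∈ range N, cos (2 * (k + 1) * θ) / (k + 1))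
      atTop (𝓝 (-∫ θ in (0 : ℝ)..(π / 2), θ ^ 2 * log (2 * sin θ))) := by
  have hbound : Tendsto (fun N : ℕ => π ^ 3 / 8 * (1 / ((N : ℝ) + 1))) atTop (𝓝 0) := by
    have := tendsto_one_div_add_atTop_nhds_zero_nat.const_mul (π ^ 3 / 8)
    rwa [mul_zero] at this
  rw [tendsto_iff_norm_sub_tendsto_zero]
  refine squeeze_zero (fun _ => norm_nonneg _) (fun N => ?_) hbound
  rw [sub_neg_eq_add, ← integral_add ((by fun_prop : Continuous _).intervalIntegrable _ _)
    intervalIntegrable_sq_mul_log_two_sin]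
  have hpi := pi_pos
  refine (norm_integral_le_of_norm_le_const (C := π ^ 2 / 4 / (N + 1)) fun θ hθ => ?_).trans_eq ?_
  · rw [uIoc_of_le (by positivity)] at hθ
    have hsin : 0 < sin θ := sin_pos_of_pos_of_le_pi_div_two hθ.1 hθ.2
    have hseries := abs_sum_cos_div_add_log_two_sin_le hsin N
    rw [← mul_add, norm_mul, norm_pow, Real.norm_eq_abs, Real.norm_eq_abs, abs_of_pos hθ.1]
    calc θ ^ 2 * |_| ≤ θ ^ 2 * (1 / (sin θ * (N + 1))) := by gcongr
      _ = θ * (θ / sin θ) / (N + 1) := by field_simp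
      _ ≤ π / 2 * (π / 2) / (N + 1) :=
        div_le_div_of_nonneg_right (mul_le_mul hθ.2 (div_sin_le_pi_div_two hθ.1 hθ.2)
          (div_nonneg hθ.1.le hsin.le) (by positivity)) (by positivity)
      _ = π ^ 2 / 4 / (N + 1) := by ring
  · rw [sub_zero, abs_of_pos (by positivity)]
    field_simp
    ring

lemma integral_sq_mul_log_two_sin :
    ∫ θ in (0 : ℝ)..(π / 2), θ ^ 2 * log (2 * sin θ) =
      3 * π / 16 * ∑' n : ℕ, 1 / ((n : ℝ) + 1) ^ 3 := by
  have hsum := ((hasSum_neg_one_pow_div_nat_add_one_pow (k := 3) (by norm_num)).tendsto_sum_nat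
    |>.const_mul (-(π / 4)))
  simp_rw [← integral_sq_mul_sum_cos] at hsum
  have := tendsto_nhds_unique tendsto_integral_sq_mul_sum_cos hsum
  norm_num [one_div] at this ⊢
  linarith

lemma integral_sq_mul_log_sin :
    ∫ θ in (0 : ℝ)..(π / 2), θ ^ 2 * log (sin θ) =
      3 * π / 16 * (∑' n : ℕ, 1 / ((n : ℝ) + 1) ^ 3) - π ^ 3 / 24 * log 2 := by
  have hsplit : ∀ θ ∈ uIcc 0 (π / 2),
      θ ^ 2 * log (sin θ) = θ ^ 2 * log (2 * sin θ) - θ ^ 2 * log 2 := by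
    intro θ hθ
    rw [Set.uIcc_of_le (by positivity)] at hθ
    rcases hθ.1.eq_or_lt with rfl | hθ0
    · simp
    rw [log_mul two_ne_zero (sin_pos_of_pos_of_le_pi_div_two hθ0 hθ.2).ne']
    ring
  rw [integral_congr hsplit, integral_sub intervalIntegrable_sq_mul_log_two_sin
    ((by fun_prop : Continuous fun θ : ℝ => θ ^ 2 * log 2).intervalIntegrable _ _),
    integral_sq_mul_log_two_sin, integral_mul_const, integral_pow]
  ring

open Real in
theorem arcsin_cube_div_x_integral :
    ((∫ x in (0:ℝ)..1, (arcsin x) ^ 3 / x : ℝ) : ℂ) =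
      (π ^ 3 / 8) * Real.log 2 - (9 / 16 : ℂ) * π * riemannZeta 3 := by
  have hzeta : riemannZeta 3 = ((∑' n : ℕ, 1 / ((n : ℝ) + 1) ^ 3 : ℝ) : ℂ) := by
    exact_mod_cast riemannZeta_natCast_eq_tsum (k := 3) (by norm_num)
  rw [integral_arcsin_pow_three_div, integral_pow_three_mul_cos_div_sin, integral_sq_mul_log_sin,
    hzeta]
  push_cast
  ring
end
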